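/- arXiv:1009.1031 — 2 statements merged into one kernel-verified Lean document; each statement's English description precedes it below -/
import Mathlib

section
/- Adding an odd player (a single citizen) increases the mafia winning-chance whenever the mafia is not in the majority: for all k ≥ 1 and m with 1 ≤ m ≤ k, w(2k+1,m) > w(2k,m). -/
/-- Double factorial: 0!! = 1, 1!! = 1, n!! = n·(n-2)!!. -/
def dfact : ℕ → ℕ
  | 0 => 1
  | 1 => 1
  | n + 2 => (n + 2) * dfact n

/-- Mafia winning-chance: w(n,0)=0, w(n,m)=1 if 2m>n, else
    w(n,m) = ((n-m)/n)·w(n-2,m) + (m/n)·w(n-2,m-1). -/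
def w : ℕ → ℕ → ℚ
  | _, 0 => 0
  | n, m + 1 =>
    if h : 2 * (m + 1) > n then 1
    else ((n : ℚ) - (m + 1)) / n * w (n - 2) (m + 1)
      + ((m : ℚ) + 1) / n * w (n - 2) m
  termination_by n _ => n
  decreasing_by all_goals omega

lemma w_zero (n : ℕ) : w n 0 = 0 := by rw [w]

lemma w_rec (n m : ℕ) (h : 2 * (m + 1) ≤ n) :
    w n (m + 1) = ((n : ℚ) - (m + 1)) / n * w (n - 2) (m + 1)
      + ((m : ℚ) + 1) / n * w (n - 2) m := by
  rw [w]; simp [show ¬ 2 * (m + 1) > n by omega]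

lemma w_win (n m : ℕ) (h : 2 * (m + 1) > n) : w n (m + 1) = 1 := by
  rw [w]; simp [h]

lemma w_nonneg : ∀ n m : ℕ, 0 ≤ w n m := by
  intro n
  induction n using Nat.strong_induction_on with
  | _ n ih =>
    intro m
    match m with
    | 0 => rw [w_zero]
    | m + 1 =>
      by_cases h : 2 * (m + 1) > n
      · rw [w_win n m h]; norm_num
      · rw [w_rec n m (by omega)]
        have hn : (0:ℚ) < n := by exact_mod_cast (by omega : 0 < n)
        have h1 : (0:ℚ) ≤ (n : ℚ) - (m + 1) := by
          have : (m:ℚ) + 1 ≤ n := by exact_mod_cast (by omega : m + 1 ≤ n)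
          linarith
        have h2 : 0 ≤ w (n - 2) (m + 1) := ih (n - 2) (by omega) (m + 1)
        have h3 : 0 ≤ w (n - 2) m := ih (n - 2) (by omega) m
        have := hn.le
        positivity

lemma w_le_one : ∀ n m : ℕ, w n m ≤ 1 := by
  intro n
  induction n using Nat.strong_induction_on with
  | _ n ih =>
    intro m
    match m with
    | 0 => rw [w_zero]; norm_num
    | m + 1 =>
      by_cases h : 2 * (m + 1) > n
      · rw [w_win n m h]
      · rw [w_rec n m (by omega)]
        have hn : (0:ℚ) < n := by exact_mod_cast (by omega : 0 < n)
        have h1 : (0:ℚ) ≤ (n : ℚ) - (m + 1) := by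
          have : (m:ℚ) + 1 ≤ n := by exact_mod_cast (by omega : m + 1 ≤ n)
          linarith
        have h2 : w (n - 2) (m + 1) ≤ 1 := ih (n - 2) (by omega) (m + 1)
        have h3 : w (n - 2) m ≤ 1 := ih (n - 2) (by omega) m
        have h4 : 0 ≤ w (n - 2) (m + 1) := w_nonneg _ _
        have h5 : 0 ≤ w (n - 2) m := w_nonneg _ _
        rw [div_mul_eq_mul_div, div_mul_eq_mul_div, ← add_div,
          div_le_one hn]
        nlinarith

lemma w_mono : ∀ n m : ℕ, w n m ≤ w n (m + 1) := by
  intro n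
  induction n using Nat.strong_induction_on with
  | _ n ih =>
    intro m
    match m with
    | 0 => rw [w_zero]; exact w_nonneg _ _
    | m + 1 =>
      by_cases h : 2 * (m + 2) > n
      · rw [w_win n (m + 1) h]; exact w_le_one _ _
      · rw [w_rec n m (by omega), w_rec n (m + 1) (by omega)]
        have hn : (0:ℚ) < n := by exact_mod_cast (by omega : 0 < n)
        have h1 : (0:ℚ) ≤ (n : ℚ) - (m + 1 + 1) := by
          have : (m:ℚ) + 1 + 1 ≤ n := by exact_mod_cast (by omega : m + 2 ≤ n)
          linarith
        have h2 : w (n - 2) (m + 1) ≤ w (n - 2) (m + 2) := ih (n - 2) (by omega) (m + 1)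
        have h3 : w (n - 2) m ≤ w (n - 2) (m + 1) := ih (n - 2) (by omega) m
        rw [div_mul_eq_mul_div, div_mul_eq_mul_div, ← add_div,
          div_mul_eq_mul_div, div_mul_eq_mul_div, ← add_div,
          div_le_div_iff₀ hn hn]
        push_cast
        nlinarith [mul_nonneg h1 (sub_nonneg.2 h2),
          mul_nonneg (by positivity : (0:ℚ) ≤ (m:ℚ) + 1) (sub_nonneg.2 h3), hn.le]

lemma w_main : ∀ k : ℕ, 1 ≤ k → ∀ m : ℕ, 1 ≤ m → m ≤ k →
    w (2 * k) m < w (2 * k + 1) m := by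
  intro k
  induction k with
  | zero => omega
  | succ k ih =>
    intro _ m hm1 hm2
    obtain ⟨j, rfl⟩ : ∃ j, m = j + 1 := ⟨m - 1, by omega⟩
    rcases Nat.eq_zero_or_pos k with hk0 | hk1
    · -- base case k = 0 : m = 1, w 2 1 < w 3 1
      subst hk0
      have hj : j = 0 := by omega
      subst hj
      norm_num
      rw [w_rec 2 0 (by norm_num), w_rec 3 0 (by norm_num)]
      norm_num [w_zero, w_win 1 0 (by norm_num), w_win 0 0 (by norm_num)]
    · -- inductive step, k ≥ 1
      have hge : ∀ i : ℕ, w (2 * k) i ≤ w (2 * k + 1) i := by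
        intro i
        match i with
        | 0 => rw [w_zero, w_zero]
        | i + 1 =>
          by_cases hik : i + 1 ≤ k
          · exact (ih hk1 (i + 1) (by omega) hik).le
          · rw [w_win (2 * k) i (by omega), w_win (2 * k + 1) i (by omega)]
      have h1 : 2 * (j + 1) ≤ 2 * (k + 1) := by omega
      rw [w_rec (2 * (k + 1)) j (by omega), w_rec (2 * (k + 1) + 1) j (by omega)]
      have e1 : 2 * (k + 1) - 2 = 2 * k := by omega
      have e2 : 2 * (k + 1) + 1 - 2 = 2 * k + 1 := by omega
      rw [e1, e2]
      set a := w (2 * k + 1) (j + 1) with ha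
      set b := w (2 * k + 1) j with hb
      set c := w (2 * k) (j + 1) with hc
      set d := w (2 * k) j with hd
      have hba : b ≤ a := w_mono (2 * k + 1) j
      have hca : c ≤ a := hge (j + 1)
      have hdb : d ≤ b := hge j
      have hKpos : (0:ℚ) < (2 * (k + 1) : ℕ) := by positivity
      have hK'pos : (0:ℚ) < (2 * (k + 1) + 1 : ℕ) := by positivity
      rw [div_mul_eq_mul_div, div_mul_eq_mul_div, ← add_div,
        div_mul_eq_mul_div, div_mul_eq_mul_div, ← add_div,
        div_lt_div_iff₀ hKpos hK'pos]
      push_cast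
      have hjk : (j:ℚ) + 1 ≤ (k:ℚ) + 1 := by exact_mod_cast (by omega : j + 1 ≤ k + 1)
      have hkq : (1:ℚ) ≤ k := by exact_mod_cast hk1
      have q1 : (0:ℚ) < (j:ℚ) + 1 := by positivity
      have q2 : (0:ℚ) < 2 * (k:ℚ) + 3 := by positivity
      have q3 : (0:ℚ) ≤ 2 * (k:ℚ) + 2 - ((j:ℚ) + 1) := by linarith
      have p1 : (0:ℚ) ≤ ((j:ℚ) + 1) * (a - b) :=
        mul_nonneg q1.le (sub_nonneg.2 hba)
      by_cases hcase : j + 1 ≤ k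
      · have hstrict : c < a := ih hk1 (j + 1) (by omega) hcase
        have q3' : (0:ℚ) < 2 * (k:ℚ) + 2 - ((j:ℚ) + 1) := by
          have : (j:ℚ) + 1 ≤ k := by exact_mod_cast (by omega : j + 1 ≤ k)
          linarith
        have p2 : (0:ℚ) < (2 * (k:ℚ) + 3) * ((2 * (k:ℚ) + 2 - ((j:ℚ) + 1)) * (a - c)) :=
          mul_pos q2 (mul_pos q3' (sub_pos.2 hstrict))
        have p3 : (0:ℚ) ≤ (2 * (k:ℚ) + 3) * (((j:ℚ) + 1) * (b - d)) :=
          mul_nonneg q2.le (mul_nonneg q1.le (sub_nonneg.2 hdb))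
        nlinarith [p1, p2, p3]
      · have hj : j = k := by omega
        have hstrict : d < b := by
          rw [hd, hb]; exact ih hk1 j (by omega) (by omega)
        have p2 : (0:ℚ) ≤ (2 * (k:ℚ) + 3) * ((2 * (k:ℚ) + 2 - ((j:ℚ) + 1)) * (a - c)) :=
          mul_nonneg q2.le (mul_nonneg q3 (sub_nonneg.2 hca))
        have p3 : (0:ℚ) < (2 * (k:ℚ) + 3) * (((j:ℚ) + 1) * (b - d)) :=
          mul_pos q2 (mul_pos q1 (sub_pos.2 hstrict))
        nlinarith [p1, p2, p3]

theorem stmt_8 : ∀ k m : ℕ, 1 ≤ k → 1 ≤ m → m ≤ k →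
    w (2 * k + 1) m > w (2 * k) m := by
  intro k m hk hm1 hm2
  exact w_main k hk m hm1 hm2
end

section
/- The closed-form solution of the pure death process: with initial state (N, M) and transition probabilities P[m → m] = (N-2t-m)/(N-2t), P[m → m-1] = m/(N-2t) at step t, the probability of m mafia members after t steps equals p_m(t) = Σ_{i=m}^{M} C(M,i)·C(i,m)·(-1)^{i-m}·((N-2t)!!/N!!)·((N-i)!!/(N-2t-i)!!), valid whenever N - 2t ≥ M. -/
/-- The pure death process of the Mafia game: p_m(0) = δ_{mM} and
    p_m(t+1) = ((N-2t-m)/(N-2t))·p_m(t) + ((m+1)/(N-2t))·p_{m+1}(t). -/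
def deathP (N M : ℕ) : ℕ → ℕ → ℚ
  | 0, m => if m = M then 1 else 0
  | t + 1, m =>
      ((N : ℚ) - 2 * t - m) / ((N : ℚ) - 2 * t) * deathP N M t m
        + ((m : ℚ) + 1) / ((N : ℚ) - 2 * t) * deathP N M t (m + 1)

lemma dfact_pos : ∀ n, 0 < dfact n
  | 0 => one_pos
  | 1 => one_pos
  | n + 2 => by rw [dfact]; exact Nat.mul_pos (by omega) (dfact_pos n)

lemma dfact_cast_ne (n : ℕ) : (dfact n : ℚ) ≠ 0 := by
  exact_mod_cast (dfact_pos n).ne'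

lemma delta_sum (m M : ℕ) :
    ∑ i ∈ Finset.Icc m M, (M.choose i : ℚ) * (i.choose m : ℚ) * (-1 : ℚ) ^ (i - m)
      = if m = M then 1 else 0 := by
  rcases le_or_gt m M with h | h
  · have reindex : ∑ i ∈ Finset.Icc m M, (M.choose i : ℚ) * (i.choose m : ℚ) * (-1 : ℚ) ^ (i - m)
        = ∑ j ∈ Finset.range (M - m + 1),
            (M.choose (m + j) : ℚ) * ((m + j).choose m : ℚ) * (-1 : ℚ) ^ j := by
      apply Finset.sum_nbij' (fun i => i - m) (fun j => m + j)
      · intro i hi; simp only [Finset.mem_Icc] at hi; simp only [Finset.mem_range]; omega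
      · intro j hj; simp only [Finset.mem_range] at hj; simp only [Finset.mem_Icc]; omega
      · intro i hi; simp only [Finset.mem_Icc] at hi; omega
      · intro j hj; omega
      · intro i hi; simp only [Finset.mem_Icc] at hi
        rw [show m + (i - m) = i by omega]
    rw [reindex]
    have hcc : ∀ j ∈ Finset.range (M - m + 1),
        (M.choose (m + j) : ℚ) * ((m + j).choose m : ℚ) * (-1 : ℚ) ^ j
          = (M.choose m : ℚ) * ((-1 : ℚ) ^ j * ((M - m).choose j : ℚ)) := by
      intro j hj
      simp only [Finset.mem_range] at hj
      have h1 := Nat.choose_mul (n := M) (show m ≤ m + j by omega)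
      rw [show (m+j) - m = j by omega] at h1
      have h2 : ((M.choose (m+j) : ℚ)) * ((m+j).choose m : ℚ)
          = (M.choose m : ℚ) * ((M-m).choose j : ℚ) := by exact_mod_cast h1
      rw [h2]; ring
    rw [Finset.sum_congr rfl hcc, ← Finset.mul_sum]
    have halt : ∑ j ∈ Finset.range (M - m + 1), (-1 : ℚ) ^ j * ((M - m).choose j : ℚ)
        = if M - m = 0 then 1 else 0 := by
      have := @Int.alternating_sum_range_choose (M - m)
      exact_mod_cast congrArg (Int.cast : ℤ → ℚ) this
    rw [halt]
    rcases eq_or_lt_of_le h with rfl | hlt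
    · simp
    · simp [show M - m ≠ 0 by omega, show ¬ m = M by omega]
  · rw [Finset.Icc_eq_empty (by omega)]
    simp [show ¬ m = M by omega]

theorem stmt_11 (N M : ℕ) (hMN : M ≤ N) :
    ∀ m t : ℕ, 2 * t + M ≤ N →
      deathP N M t m =
        ∑ i ∈ Finset.Icc m M,
          (M.choose i : ℚ) * (i.choose m : ℚ) * (-1 : ℚ) ^ (i - m) *
            ((dfact (N - 2 * t) : ℚ) / (dfact N : ℚ)) *
            ((dfact (N - i) : ℚ) / (dfact (N - 2 * t - i) : ℚ)) := by
  intro m t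
  induction t generalizing m with
  | zero =>
      intro _
      simp only [deathP, Nat.mul_zero, Nat.sub_zero]
      rw [← delta_sum m M]
      apply Finset.sum_congr rfl
      intro i hi
      rw [div_self (dfact_cast_ne N), div_self (dfact_cast_ne (N - i))]
      ring
  | succ t ih =>
      intro hN
      have ht : 2 * t + M ≤ N := by omega
      simp only [deathP]
      rw [ih m ht, ih (m+1) ht]
      -- extend the second sum to Icc m M
      have hS : ∑ i ∈ Finset.Icc (m+1) M,
            (M.choose i : ℚ) * (i.choose (m+1) : ℚ) * (-1 : ℚ) ^ (i - (m+1)) *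
              ((dfact (N - 2 * t) : ℚ) / (dfact N : ℚ)) *
              ((dfact (N - i) : ℚ) / (dfact (N - 2 * t - i) : ℚ))
          = ∑ i ∈ Finset.Icc m M,
            (M.choose i : ℚ) * (i.choose (m+1) : ℚ) * (-1 : ℚ) ^ (i - (m+1)) *
              ((dfact (N - 2 * t) : ℚ) / (dfact N : ℚ)) *
              ((dfact (N - i) : ℚ) / (dfact (N - 2 * t - i) : ℚ)) := by
        apply Finset.sum_subset
        · apply Finset.Icc_subset_Icc_left; omega
        · intro x hx hnx
          simp only [Finset.mem_Icc] at hx hnx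
          have : x = m := by omega
          subst this
          simp [Nat.choose_succ_self]
      rw [hS, Finset.mul_sum, Finset.mul_sum, ← Finset.sum_add_distrib]
      apply Finset.sum_congr rfl
      intro i hi
      simp only [Finset.mem_Icc] at hi
      obtain ⟨him, hiM⟩ := hi
      -- key facts
      have h2t : 2 * t + 2 + i ≤ N := by omega
      have hA : ((N : ℚ) - 2 * t) ≠ 0 := by
        have : (2 * t : ℚ) < N := by exact_mod_cast (by omega : 2 * t < N)
        intro h; nlinarith
      have e1 : (dfact (N - 2 * t) : ℚ) = ((N : ℚ) - 2 * t) * (dfact (N - 2 * (t+1)) : ℚ) := by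
        have hn : N - 2 * t = (N - 2 * (t+1)) + 2 := by omega
        rw [hn, dfact]
        push_cast
        rw [show ((N - 2 * (t+1) : ℕ) : ℚ) = (N : ℚ) - 2 * (t+1) by
          exact_mod_cast Nat.cast_sub (by omega)]
        ring_nf
      have e2 : (dfact (N - 2 * t - i) : ℚ)
          = ((N : ℚ) - 2 * t - i) * (dfact (N - 2 * (t+1) - i) : ℚ) := by
        have hn : N - 2 * t - i = (N - 2 * (t+1) - i) + 2 := by omega
        rw [hn, dfact]
        push_cast
        rw [show ((N - 2 * (t+1) - i : ℕ) : ℚ) = (N : ℚ) - 2 * (t+1) - i by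
          rw [Nat.cast_sub (show i ≤ N - 2*(t+1) by omega),
              Nat.cast_sub (show 2*(t+1) ≤ N by omega)]; push_cast; ring]
        ring_nf
      have hB : ((N : ℚ) - 2 * t - i) ≠ 0 := by
        have : (2 * t + i : ℚ) < N := by exact_mod_cast (by omega : 2 * t + i < N)
        intro h; nlinarith
      have hc2 : ((i.choose (m+1)) : ℚ) = (i.choose m : ℚ) * ((i : ℚ) - m) / ((m : ℚ) + 1) := by
        have h1 := Nat.choose_succ_right_eq i m
        have h2 : ((i.choose (m+1) : ℚ)) * ((m : ℚ) + 1) = (i.choose m : ℚ) * ((i : ℚ) - m) := by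
          have := congrArg (Nat.cast : ℕ → ℚ) h1
          push_cast [Nat.cast_sub him] at this
          linarith [this]
        field_simp
        linarith [h2]
      have hDN := dfact_cast_ne N
      have hD2i := dfact_cast_ne (N - 2 * (t+1) - i)
      rcases eq_or_lt_of_le him with rfl | hlt
      · rw [Nat.choose_succ_self, e1, e2]
        simp only [Nat.cast_zero, mul_zero, zero_mul]
        rw [Nat.sub_self, pow_zero]
        field_simp
        ring
      · have hs : ((-1 : ℚ)) ^ (i - m) = -(-1 : ℚ) ^ (i - (m+1)) := by
          rw [show i - m = (i - (m+1)) + 1 by omega, pow_succ]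
          ring
        have hm1 : ((m : ℚ) + 1) ≠ 0 := by positivity
        rw [hc2, hs, e1, e2]
        field_simp
        ring
end
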